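/- arXiv:2404.11893 — 2 statements merged into one kernel-verified Lean document; each statement's English description precedes it below -/
import Mathlib

section
/- Let F : ℝ^d → ℝ be differentiable with L-Lipschitz gradient, let ν > 0, θ > 0, 1 ≤ N ≤ d, and fix x ∈ ℝ^d. Let G : Ω → ℝ^d be a square-integrable random vector on a probability space with E[G] = ∇^{FD}F(x) and E‖G‖² ≤ (1 + θ²)·(d/N)·‖∇^{FD}F(x)‖² (as holds for the randomized coordinate finite-difference estimator under the theoretical norm condition). If the step size satisfies 0 < α ≤ N/(4·d·(1 + θ²)·L), then E[F(x − α·G)] ≤ F(x) − (α/4)·‖∇F(x)‖² + (3·α·L²·ν²·d)/16. -/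
/-!
The descent inequality `f y ≤ f x + ⟪∇f x, y - x⟫ + L/2 ‖y - x‖²`, averaged over `y = x - α G`,
bounds `E[F(x - α G)]` by `F x - α ⟪∇F x, ∇^{FD}F x⟫ + L α²/2 · E‖G‖²`, and the step size makes
the last term at most `α/8 ‖∇^{FD}F x‖²`. The same inequality along `ν eⱼ` shows that each
coordinate of `∇^{FD}F x - ∇F x` has size at most `Lν/2`, so `‖∇^{FD}F x - ∇F x‖² ≤ L²ν²d/4`; the
elementary bound `-⟪g, h⟫ + ‖h‖²/8 ≤ -‖g‖²/4 + 3/4 ‖h - g‖²` then finishes the proof.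
-/

open MeasureTheory

/-- The forward finite-difference gradient estimator
`∇^{FD}F(x) := ∑ⱼ ((F(x + ν eⱼ) − F(x))/ν) eⱼ`. -/
noncomputable def fdGrad {d : ℕ} (F : EuclideanSpace ℝ (Fin d) → ℝ) (ν : ℝ)
    (x : EuclideanSpace ℝ (Fin d)) : EuclideanSpace ℝ (Fin d) :=
  ∑ j, ((F (x + ν • EuclideanSpace.single j (1 : ℝ)) - F x) / ν) •
    EuclideanSpace.single j (1 : ℝ)

theorem norm_sub_sub_fderiv_le_of_lipschitz_fderiv {E F : Type*}
    [NormedAddCommGroup E] [NormedSpace ℝ E] [NormedAddCommGroup F] [NormedSpace ℝ F]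
    {f : E → F} {L : ℝ} (hf : Differentiable ℝ f)
    (hLip : ∀ a b, ‖fderiv ℝ f a - fderiv ℝ f b‖ ≤ L * ‖a - b‖) (x y : E) :
    ‖f y - f x - fderiv ℝ f x (y - x)‖ ≤ L / 2 * ‖y - x‖ ^ 2 := by
  set v := y - x
  let φ : ℝ → F := fun t ↦ f (x + t • v) - f x - t • fderiv ℝ f x v
  have hφ : ∀ t, HasDerivAt φ (fderiv ℝ f (x + t • v) v - fderiv ℝ f x v) t := by
    intro t
    have hline : HasDerivAt (fun s : ℝ ↦ x + s • v) v t := by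
      simpa using ((hasDerivAt_id t).smul_const v).const_add x
    exact (((hf _).hasFDerivAt.comp_hasDerivAt t hline).sub_const (f x)).sub
      (by simpa using (hasDerivAt_id t).smul_const (fderiv ℝ f x v))
  -- Comparing `φ` with this parabola rather than with a line gives `L / 2` instead of `L`.
  have hB : ∀ t, HasDerivAt (fun s : ℝ ↦ L / 2 * ‖v‖ ^ 2 * s ^ 2) (L * ‖v‖ ^ 2 * t) t := fun t ↦
    ((hasDerivAt_pow 2 t).const_mul (L / 2 * ‖v‖ ^ 2)).congr_deriv (by push_cast; ring)
  have hφ_bound : ∀ t ∈ Set.Ico (0 : ℝ) 1,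
      ‖fderiv ℝ f (x + t • v) v - fderiv ℝ f x v‖ ≤ L * ‖v‖ ^ 2 * t := by
    rintro t ⟨ht, -⟩
    calc ‖fderiv ℝ f (x + t • v) v - fderiv ℝ f x v‖
        = ‖(fderiv ℝ f (x + t • v) - fderiv ℝ f x) v‖ := rfl
      _ ≤ ‖fderiv ℝ f (x + t • v) - fderiv ℝ f x‖ * ‖v‖ := ContinuousLinearMap.le_opNorm _ _
      _ ≤ L * ‖(x + t • v) - x‖ * ‖v‖ := by gcongr; exact hLip _ _
      _ = L * ‖v‖ ^ 2 * t := by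
        rw [add_sub_cancel_left, norm_smul, Real.norm_of_nonneg ht]; ring
  have hφ_one := image_norm_le_of_norm_deriv_right_le_deriv_boundary
    (fun t _ ↦ (hφ t).continuousAt.continuousWithinAt) (fun t _ ↦ (hφ t).hasDerivWithinAt)
    (by simp [φ]) hB hφ_bound (Set.right_mem_Icc.2 zero_le_one)
  simpa [φ, v] using hφ_one

theorem abs_sub_sub_inner_gradient_le {E : Type*} [NormedAddCommGroup E]
    [InnerProductSpace ℝ E] [CompleteSpace E] {f : E → ℝ} {L : ℝ} (hf : Differentiable ℝ f)
    (hLip : ∀ a b, ‖gradient f a - gradient f b‖ ≤ L * ‖a - b‖) (x y : E) :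
    |f y - f x - inner ℝ (gradient f x) (y - x)| ≤ L / 2 * ‖y - x‖ ^ 2 := by
  have hLip' : ∀ a b, ‖fderiv ℝ f a - fderiv ℝ f b‖ ≤ L * ‖a - b‖ := fun a b ↦ by
    simpa [gradient, ← map_sub] using hLip a b
  simpa [gradient, InnerProductSpace.toDual_symm_apply] using
    norm_sub_sub_fderiv_le_of_lipschitz_fderiv hf hLip' x y

section LipschitzGradient

variable {E : Type*} [NormedAddCommGroup E] [InnerProductSpace ℝ E] [CompleteSpace E]
  {f : E → ℝ} {L : ℝ} {Ω : Type*} {mΩ : MeasurableSpace Ω} {P : Measure Ω}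

theorem integrable_comp_of_memLp_two [IsFiniteMeasure P] (hf : Differentiable ℝ f)
    (hLip : ∀ a b, ‖gradient f a - gradient f b‖ ≤ L * ‖a - b‖) {Y : Ω → E}
    (hY : MemLp Y 2 P) : Integrable (fun ω ↦ f (Y ω)) P := by
  refine Integrable.mono'
    (g := fun ω ↦ |f 0| + ‖gradient f 0‖ * ‖Y ω‖ + L / 2 * ‖Y ω‖ ^ 2)
    (((integrable_const _).add ((hY.integrable one_le_two).norm.const_mul _)).add
      (hY.norm.integrable_sq.const_mul _))
    (hf.continuous.comp_aestronglyMeasurable hY.1) (ae_of_all _ fun ω ↦ ?_)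
  have hquad := abs_sub_sub_inner_gradient_le hf hLip 0 (Y ω)
  have hinner := abs_real_inner_le_norm (gradient f 0) (Y ω)
  rw [sub_zero] at hquad
  rw [Real.norm_eq_abs, abs_le]
  constructor <;> linarith [abs_le.1 hquad, abs_le.1 hinner, neg_abs_le (f 0), le_abs_self (f 0)]

theorem integral_comp_sub_smul_le [IsProbabilityMeasure P] (hf : Differentiable ℝ f)
    (hLip : ∀ a b, ‖gradient f a - gradient f b‖ ≤ L * ‖a - b‖) (x : E) (α : ℝ)
    {G : Ω → E} (hG : MemLp G 2 P) :
    ∫ ω, f (x - α • G ω) ∂P ≤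
      f x - α * inner ℝ (gradient f x) (∫ ω, G ω ∂P) + L / 2 * α ^ 2 * ∫ ω, ‖G ω‖ ^ 2 ∂P := by
  have hG1 : Integrable G P := hG.integrable one_le_two
  have hinner : Integrable (fun ω ↦ inner ℝ (gradient f x) (G ω)) P := hG1.const_inner _
  have hlinear : Integrable (fun ω ↦ f x - α * inner ℝ (gradient f x) (G ω)) P :=
    (integrable_const _).sub (hinner.const_mul α)
  have hsq : Integrable (fun ω ↦ L / 2 * α ^ 2 * ‖G ω‖ ^ 2) P :=
    hG.norm.integrable_sq.const_mul _
  have hpointwise : ∀ ω, f (x - α • G ω) ≤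
      f x - α * inner ℝ (gradient f x) (G ω) + L / 2 * α ^ 2 * ‖G ω‖ ^ 2 := fun ω ↦ by
    have hquad := abs_sub_sub_inner_gradient_le hf hLip x (x - α • G ω)
    rw [sub_sub_cancel_left, inner_neg_right, real_inner_smul_right, norm_neg, norm_smul,
      mul_pow, Real.norm_eq_abs, sq_abs] at hquad
    linarith [(abs_le.1 hquad).2]
  calc ∫ ω, f (x - α • G ω) ∂P
      ≤ ∫ ω, (f x - α * inner ℝ (gradient f x) (G ω) + L / 2 * α ^ 2 * ‖G ω‖ ^ 2) ∂P :=
        integral_mono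
          (integrable_comp_of_memLp_two hf hLip ((memLp_const x).sub (hG.const_smul α)))
          (hlinear.add hsq) hpointwise
    _ = _ := by
        rw [integral_add hlinear hsq,
          integral_sub (integrable_const _) (hinner.const_mul α), integral_const_mul,
          integral_const_mul, integral_inner hG1, integral_const, probReal_univ, one_smul]

end LipschitzGradient

theorem EuclideanSpace.norm_sq_le_card_mul_sq {𝕜 ι : Type*} [RCLike 𝕜] [Fintype ι]
    {w : EuclideanSpace 𝕜 ι} {c : ℝ} (hw : ∀ i, ‖w i‖ ≤ c) :
    ‖w‖ ^ 2 ≤ Fintype.card ι * c ^ 2 := by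
  rw [EuclideanSpace.norm_sq_eq]
  calc ∑ i, ‖w i‖ ^ 2 ≤ ∑ _i : ι, c ^ 2 :=
        Finset.sum_le_sum fun i _ ↦ pow_le_pow_left₀ (norm_nonneg _) (hw i) 2
    _ = Fintype.card ι * c ^ 2 := by simp

section FiniteDifference

variable {d : ℕ} {F : EuclideanSpace ℝ (Fin d) → ℝ} {L ν : ℝ}

theorem fdGrad_apply (F : EuclideanSpace ℝ (Fin d) → ℝ) (ν : ℝ) (x : EuclideanSpace ℝ (Fin d))
    (j : Fin d) :
    fdGrad F ν x j = (F (x + ν • EuclideanSpace.single j (1 : ℝ)) - F x) / ν := by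
  simp [fdGrad, Finset.sum_apply, Pi.single_apply]

theorem abs_fdGrad_sub_gradient_apply_le (hF : Differentiable ℝ F)
    (hLip : ∀ a b, ‖gradient F a - gradient F b‖ ≤ L * ‖a - b‖) (hν : ν ≠ 0)
    (x : EuclideanSpace ℝ (Fin d)) (j : Fin d) :
    |fdGrad F ν x j - gradient F x j| ≤ L * |ν| / 2 := by
  have hquad := abs_sub_sub_inner_gradient_le hF hLip x (x + ν • EuclideanSpace.single j 1)
  rw [add_sub_cancel_left, real_inner_smul_right, EuclideanSpace.inner_single_right, norm_smul,
    PiLp.norm_single, norm_one, mul_one, Real.norm_eq_abs, sq_abs] at hquad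
  have hν' : 0 < |ν| := abs_pos.2 hν
  rw [fdGrad_apply, div_sub' hν, abs_div, div_le_iff₀ hν']
  calc |F (x + ν • EuclideanSpace.single j 1) - F x - ν * gradient F x j|
      ≤ L / 2 * ν ^ 2 := by simpa [mul_comm] using hquad
    _ = L * |ν| / 2 * |ν| := by rw [← sq_abs]; ring

theorem norm_fdGrad_sub_gradient_sq_le (hF : Differentiable ℝ F)
    (hLip : ∀ a b, ‖gradient F a - gradient F b‖ ≤ L * ‖a - b‖) (hν : ν ≠ 0)
    (x : EuclideanSpace ℝ (Fin d)) :
    ‖fdGrad F ν x - gradient F x‖ ^ 2 ≤ L ^ 2 * ν ^ 2 * d / 4 := by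
  have hcard := EuclideanSpace.norm_sq_le_card_mul_sq (w := fdGrad F ν x - gradient F x) fun j ↦ by
    simpa using abs_fdGrad_sub_gradient_apply_le hF hLip hν x j
  rw [Fintype.card_fin, div_pow, mul_pow, sq_abs] at hcard
  linarith

end FiniteDifference

theorem neg_inner_add_norm_sq_div_eight_le {E : Type*} [NormedAddCommGroup E]
    [InnerProductSpace ℝ E] (g h : E) :
    -inner ℝ g h + ‖h‖ ^ 2 / 8 ≤ -(‖g‖ ^ 2 / 4) + 3 / 4 * ‖h - g‖ ^ 2 := by
  -- The right side minus the left side is `‖h‖² / 2 + ‖2 • g - h‖² / 8`.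
  have h2g := sq_nonneg ‖(2 : ℝ) • g - h‖
  rw [norm_sub_sq_real, norm_smul, real_inner_smul_left, Real.norm_two] at h2g
  rw [norm_sub_sq_real, real_inner_comm g h]
  nlinarith [sq_nonneg ‖h‖]

theorem mul_sq_mul_le_of_le_div {a b L α M B : ℝ} (hα0 : 0 < α) (hα : α ≤ a / (4 * b * L))
    (ha : 0 ≤ a) (hb : 0 ≤ b) (hB : 0 ≤ B) (hM : M ≤ b / a * B) :
    L / 2 * α ^ 2 * M ≤ α / 8 * B := by
  have hden : 0 < 4 * b * L := by
    by_contra! hden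
    exact (hα.trans (div_nonpos_of_nonneg_of_nonpos ha hden)).not_gt hα0
  have hαden : α * (4 * b * L) ≤ a := (le_div_iff₀ hden).1 hα
  have ha_pos : 0 < a := (mul_pos hα0 hden).trans_le hαden
  have hL : 0 < L := pos_of_mul_pos_right hden (by positivity)
  calc L / 2 * α ^ 2 * M ≤ L / 2 * α ^ 2 * (b / a * B) := by gcongr
    _ = α / 8 * B * (α * (4 * b * L) / a) := by field_simp; ring
    _ ≤ α / 8 * B := mul_le_of_le_one_right (by positivity) ((div_le_one ha_pos).2 hαden)

theorem per_iteration_decrease_RC_general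
    {d N : ℕ} {Ω : Type*} {mΩ : MeasurableSpace Ω}
    (P : Measure Ω) [IsProbabilityMeasure P]
    (F : EuclideanSpace ℝ (Fin d) → ℝ) (L ν θ α : ℝ)
    (hF : Differentiable ℝ F)
    (hLip : ∀ x y, ‖gradient F x - gradient F y‖ ≤ L * ‖x - y‖)
    (hν : 0 < ν)
    (x : EuclideanSpace ℝ (Fin d))
    (G : Ω → EuclideanSpace ℝ (Fin d)) (hG : MemLp G 2 P)
    (hmean : ∫ ω, G ω ∂P = fdGrad F ν x)
    (hsecond : ∫ ω, ‖G ω‖ ^ 2 ∂P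
      ≤ (1 + θ ^ 2) * ((d : ℝ) / (N : ℝ)) * ‖fdGrad F ν x‖ ^ 2)
    (hα0 : 0 < α) (hα : α ≤ (N : ℝ) / (4 * (d : ℝ) * (1 + θ ^ 2) * L)) :
    ∫ ω, F (x - α • G ω) ∂P
      ≤ F x - (α / 4) * ‖gradient F x‖ ^ 2 + 3 * α * L ^ 2 * ν ^ 2 * d / 16 := by
  have hstep : L / 2 * α ^ 2 * ∫ ω, ‖G ω‖ ^ 2 ∂P ≤ α / 8 * ‖fdGrad F ν x‖ ^ 2 :=
    mul_sq_mul_le_of_le_div (b := d * (1 + θ ^ 2)) hα0 (hα.trans_eq (by ring)) (by positivity)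
      (by positivity) (by positivity) (hsecond.trans_eq (by ring))
  calc ∫ ω, F (x - α • G ω) ∂P
      ≤ F x - α * inner ℝ (gradient F x) (∫ ω, G ω ∂P) + L / 2 * α ^ 2 * ∫ ω, ‖G ω‖ ^ 2 ∂P :=
        integral_comp_sub_smul_le hF hLip x α hG
    _ ≤ F x + α * (-inner ℝ (gradient F x) (fdGrad F ν x) + ‖fdGrad F ν x‖ ^ 2 / 8) := by
        rw [hmean]; linarith
    _ ≤ F x + α * (-(‖gradient F x‖ ^ 2 / 4) + 3 / 4 * ‖fdGrad F ν x - gradient F x‖ ^ 2) := by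
        gcongr F x + α * ?_; exact neg_inner_add_norm_sq_div_eight_le _ _
    _ ≤ F x + α * (-(‖gradient F x‖ ^ 2 / 4) + 3 / 4 * (L ^ 2 * ν ^ 2 * d / 4)) := by
        gcongr; exact norm_fdGrad_sub_gradient_sq_le hF hLip hν.ne' x
    _ = F x - (α / 4) * ‖gradient F x‖ ^ 2 + 3 * α * L ^ 2 * ν ^ 2 * d / 16 := by ring

/-- If `F` has `L`-Lipschitz gradient, `1 ≤ N ≤ d`, `G` is a
square-integrable random vector with `E[G] = ∇^{FD}F(x)` and
`E‖G‖² ≤ (1+θ²)(d/N)‖∇^{FD}F(x)‖²` (as holds for the randomized coordinate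
finite-difference estimator under the theoretical norm condition), and
`0 < α ≤ N/(4d(1+θ²)L)`, then
`E[F(x − α G)] ≤ F(x) − (α/4)‖∇F(x)‖² + 3 α L² ν² d / 16`. -/
theorem per_iteration_decrease_RC
    {d N : ℕ} {Ω : Type*} {mΩ : MeasurableSpace Ω}
    (P : Measure Ω) [IsProbabilityMeasure P]
    (F : EuclideanSpace ℝ (Fin d) → ℝ) (L ν θ α : ℝ)
    (hF : Differentiable ℝ F)
    (hLip : ∀ x y, ‖gradient F x - gradient F y‖ ≤ L * ‖x - y‖)
    (hν : 0 < ν) (hθ : 0 < θ) (hN1 : 1 ≤ N) (hNd : N ≤ d)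
    (x : EuclideanSpace ℝ (Fin d))
    (G : Ω → EuclideanSpace ℝ (Fin d)) (hG : MemLp G 2 P)
    (hmean : ∫ ω, G ω ∂P = fdGrad F ν x)
    (hsecond : ∫ ω, ‖G ω‖ ^ 2 ∂P
      ≤ (1 + θ ^ 2) * ((d : ℝ) / (N : ℝ)) * ‖fdGrad F ν x‖ ^ 2)
    (hα0 : 0 < α) (hα : α ≤ (N : ℝ) / (4 * (d : ℝ) * (1 + θ ^ 2) * L)) :
    ∫ ω, F (x - α • G ω) ∂P
      ≤ F x - (α / 4) * ‖gradient F x‖ ^ 2 + 3 * α * L ^ 2 * ν ^ 2 * d / 16 :=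
  per_iteration_decrease_RC_general (mΩ := mΩ) P F L ν θ α hF hLip hν x G hG hmean hsecond hα0 hα
end

section
/- Let f, F : ℝ^d → ℝ be differentiable, with f having L_f-Lipschitz gradient and F having L_F-Lipschitz gradient where L_F ≤ L_f. Then for every x, u ∈ ℝ^d and every ν > 0, ( (f(x + ν u) − f(x))/ν − (F(x + ν u) − F(x))/ν )² ≤ 2·‖∇f(x) − ∇F(x)‖²·‖u‖² + 2·L_f²·ν²·‖u‖⁴. -/
/-!
Put `g = f - F`; its gradient is `(L_f + L_F)`-Lipschitz, hence `2 L_f`-Lipschitz. The descent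
lemma `|g (x + v) - g x - ⟪∇g x, v⟫| ≤ L/2 ‖v‖²` (obtained by comparing `t ↦ g (x + t v)` with
the parabola `t ↦ L/2 ‖v‖² t²`) says that the difference quotient of `g` along `u` is
`⟪∇g x, u⟫` up to an error of at most `L_f ν ‖u‖²`. Conclude with Cauchy–Schwarz and
`(a + b)² ≤ 2 a² + 2 b²`.
-/

open InnerProductSpace Set
open scoped Gradient

section

variable {E : Type*} [NormedAddCommGroup E] [InnerProductSpace ℝ E] [CompleteSpace E]

theorem HasGradientAt.sub {f g : E → ℝ} {f' g' x : E} (hf : HasGradientAt f f' x)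
    (hg : HasGradientAt g g' x) : HasGradientAt (f - g) (f' - g') x := by
  rw [hasGradientAt_iff_hasFDerivAt, map_sub]
  exact hf.hasFDerivAt.sub hg.hasFDerivAt

theorem HasGradientAt.hasDerivAt_comp_add_smul {g : E → ℝ} {g' x v : E} {t : ℝ}
    (h : HasGradientAt g g' (x + t • v)) :
    HasDerivAt (fun s : ℝ => g (x + s • v)) ⟪g', v⟫_ℝ t := by
  have hline : HasDerivAt (fun s : ℝ => x + s • v) v t := by
    simpa using ((hasDerivAt_id t).smul_const v).const_add x
  simpa only [toDual_apply_apply, Function.comp_def] using h.hasFDerivAt.comp_hasDerivAt t hline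

theorem norm_gradient_sub_sub_le {f F : E → ℝ} {Lf LF : ℝ} (hf : Differentiable ℝ f)
    (hF : Differentiable ℝ F) (hLf : ∀ x y, ‖∇ f x - ∇ f y‖ ≤ Lf * ‖x - y‖)
    (hLF : ∀ x y, ‖∇ F x - ∇ F y‖ ≤ LF * ‖x - y‖) (x y : E) :
    ‖∇ (f - F) x - ∇ (f - F) y‖ ≤ (Lf + LF) * ‖x - y‖ := by
  rw [((hf x).hasGradientAt.sub (hF x).hasGradientAt).gradient,
    ((hf y).hasGradientAt.sub (hF y).hasGradientAt).gradient, sub_sub_sub_comm]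
  calc ‖(∇ f x - ∇ f y) - (∇ F x - ∇ F y)‖
      ≤ ‖∇ f x - ∇ f y‖ + ‖∇ F x - ∇ F y‖ := norm_sub_le _ _
    _ ≤ Lf * ‖x - y‖ + LF * ‖x - y‖ := add_le_add (hLf x y) (hLF x y)
    _ = (Lf + LF) * ‖x - y‖ := by ring

variable {g : E → ℝ} {L : ℝ}

theorem abs_sub_sub_inner_gradient_le_s10 (hg : Differentiable ℝ g)
    (hL : ∀ x y, ‖∇ g x - ∇ g y‖ ≤ L * ‖x - y‖) (x v : E) :
    |g (x + v) - g x - ⟪∇ g x, v⟫_ℝ| ≤ L / 2 * ‖v‖ ^ 2 := by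
  set φ : ℝ → ℝ := fun t => g (x + t • v) - g x - t * ⟪∇ g x, v⟫_ℝ
  have hφ : ∀ t, HasDerivAt φ ⟪∇ g (x + t • v) - ∇ g x, v⟫_ℝ t := fun t => by
    rw [inner_sub_left]
    exact (((hg _).hasGradientAt.hasDerivAt_comp_add_smul).sub_const _).sub
      ((hasDerivAt_id t).mul_const _ |>.congr_deriv (one_mul _))
  have hB : ∀ t, HasDerivAt (fun t => L / 2 * ‖v‖ ^ 2 * t ^ 2) (L * ‖v‖ ^ 2 * t) t := fun t =>
    ((hasDerivAt_pow 2 t).const_mul (L / 2 * ‖v‖ ^ 2)).congr_deriv (by norm_num; ring)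
  have hbound : ∀ t ∈ Ico (0 : ℝ) 1, ‖⟪∇ g (x + t • v) - ∇ g x, v⟫_ℝ‖ ≤ L * ‖v‖ ^ 2 * t := by
    rintro t ⟨ht, -⟩
    calc ‖⟪∇ g (x + t • v) - ∇ g x, v⟫_ℝ‖
        ≤ ‖∇ g (x + t • v) - ∇ g x‖ * ‖v‖ := norm_inner_le_norm _ _
      _ ≤ L * ‖x + t • v - x‖ * ‖v‖ := by gcongr; exact hL _ _
      _ = L * ‖v‖ ^ 2 * t := by
        rw [add_sub_cancel_left, norm_smul, Real.norm_of_nonneg ht]; ring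
  have key := image_norm_le_of_norm_deriv_right_le_deriv_boundary
    (fun t _ => (hφ t).continuousAt.continuousWithinAt) (fun t _ => (hφ t).hasDerivWithinAt)
    (by simp [φ]) hB hbound (right_mem_Icc.2 zero_le_one)
  simpa [φ] using key

theorem abs_slope_sub_inner_gradient_le (hg : Differentiable ℝ g)
    (hL : ∀ x y, ‖∇ g x - ∇ g y‖ ≤ L * ‖x - y‖) (x u : E) {ν : ℝ} (hν : 0 < ν) :
    |(g (x + ν • u) - g x) / ν - ⟪∇ g x, u⟫_ℝ| ≤ L / 2 * ν * ‖u‖ ^ 2 := by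
  have h := abs_sub_sub_inner_gradient_le_s10 hg hL x (ν • u)
  rw [real_inner_smul_right, norm_smul, Real.norm_of_nonneg hν.le] at h
  rw [← mul_div_cancel_left₀ ⟪∇ g x, u⟫_ℝ hν.ne', ← sub_div, abs_div, abs_of_pos hν,
    div_le_iff₀ hν]
  linarith

end

/-- For `f, F : ℝ^d → ℝ` differentiable with `L_f`- resp.
`L_F`-Lipschitz gradients and `L_F ≤ L_f`, for every `x, u ∈ ℝ^d` and `ν > 0`,
`((f(x+νu) − f(x))/ν − (F(x+νu) − F(x))/ν)² ≤ 2‖∇f(x) − ∇F(x)‖²‖u‖² + 2L_f²ν²‖u‖⁴`. -/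
theorem directional_difference_error_bound
    {d : ℕ} (f F : EuclideanSpace ℝ (Fin d) → ℝ) (Lf LF : ℝ)
    (hf : Differentiable ℝ f) (hF : Differentiable ℝ F)
    (hLf : ∀ x y, ‖gradient f x - gradient f y‖ ≤ Lf * ‖x - y‖)
    (hLF : ∀ x y, ‖gradient F x - gradient F y‖ ≤ LF * ‖x - y‖)
    (hLL : LF ≤ Lf)
    (x u : EuclideanSpace ℝ (Fin d)) (ν : ℝ) (hν : 0 < ν) :
    ((f (x + ν • u) - f x) / ν - (F (x + ν • u) - F x) / ν) ^ 2
      ≤ 2 * ‖gradient f x - gradient F x‖ ^ 2 * ‖u‖ ^ 2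
        + 2 * Lf ^ 2 * ν ^ 2 * ‖u‖ ^ 4 := by
  set D := (f (x + ν • u) - f x) / ν - (F (x + ν • u) - F x) / ν
  have hslope := abs_slope_sub_inner_gradient_le (hf.sub hF)
    (norm_gradient_sub_sub_le hf hF hLf hLF) x u hν
  have hD : ((f - F) (x + ν • u) - (f - F) x) / ν = D := by
    simp only [D, Pi.sub_apply]
    ring
  rw [((hf x).hasGradientAt.sub (hF x).hasGradientAt).gradient, hD] at hslope
  set G := ∇ f x - ∇ F x
  have herror : |D - ⟪G, u⟫_ℝ| ≤ Lf * ν * ‖u‖ ^ 2 := hslope.trans (by gcongr; linarith)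
  have hinner := abs_real_inner_le_norm G u
  calc D ^ 2 = (⟪G, u⟫_ℝ + (D - ⟪G, u⟫_ℝ)) ^ 2 := by ring
    _ ≤ 2 * (⟪G, u⟫_ℝ ^ 2 + (D - ⟪G, u⟫_ℝ) ^ 2) := add_sq_le
    _ ≤ 2 * ((‖G‖ * ‖u‖) ^ 2 + (Lf * ν * ‖u‖ ^ 2) ^ 2) := by
      gcongr 2 * (?_ + ?_)
      · exact sq_le_sq' (abs_le.1 hinner).1 (abs_le.1 hinner).2
      · exact sq_le_sq' (abs_le.1 herror).1 (abs_le.1 herror).2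
    _ = 2 * ‖G‖ ^ 2 * ‖u‖ ^ 2 + 2 * Lf ^ 2 * ν ^ 2 * ‖u‖ ^ 4 := by ring
end
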